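/- Let P* be an optimal tuple of n points in [0,1]^2. Then every admissible up-shift and every admissible right-shift of P* does not increase the star discrepancy: d*(up(P*,i,δ)) ≤ d*(P*) and d*(ri(P*,i,δ)) ≤ d*(P*); in particular, the shifted tuples are again optimal. -/

import Mathlib

open Finset

noncomputable section

open scoped Classical

/-- Number of points of the tuple `P` lying in the open anchored box `[0,q)`. -/
def openCount {n d : ℕ} (P : Fin n → Fin d → ℝ) (q : Fin d → ℝ) : ℕ :=
  (Finset.univ.filter (fun i : Fin n => ∀ j, P i j < q j)).card

/-- Number of points of the tuple `P` lying in the closed anchored box `[0,q]`. -/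
def closedCount {n d : ℕ} (P : Fin n → Fin d → ℝ) (q : Fin d → ℝ) : ℕ :=
  (Finset.univ.filter (fun i : Fin n => ∀ j, P i j ≤ q j)).card

/-- Open local discrepancy `δ(P,q) = ∏ q_j − #{i : x⁽ⁱ⁾ ∈ [0,q)}/n`. -/
def openDisc {n d : ℕ} (P : Fin n → Fin d → ℝ) (q : Fin d → ℝ) : ℝ :=
  (∏ j, q j) - (openCount P q : ℝ) / n

/-- Closed local discrepancy `δ̄(P,q) = #{i : x⁽ⁱ⁾ ∈ [0,q]}/n − ∏ q_j`. -/
def closedDisc {n d : ℕ} (P : Fin n → Fin d → ℝ) (q : Fin d → ℝ) : ℝ :=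
  (closedCount P q : ℝ) / n - ∏ j, q j

/-- `max(δ(P,q), δ̄(P,q))`. -/
def localDisc {n d : ℕ} (P : Fin n → Fin d → ℝ) (q : Fin d → ℝ) : ℝ :=
  max (openDisc P q) (closedDisc P q)

/-- The L∞ star discrepancy `d*(P) = sup_{q ∈ [0,1]^d} max(δ(P,q), δ̄(P,q))`. -/
def starDisc {n d : ℕ} (P : Fin n → Fin d → ℝ) : ℝ :=
  sSup {r : ℝ | ∃ q : Fin d → ℝ, (∀ j, q j ∈ Set.Icc (0:ℝ) 1) ∧ r = localDisc P q}

/-- A tuple of `n` points in `[0,1]^2` is optimal if its star discrepancy is minimal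
among all `n`-point tuples in `[0,1]^2`. -/
def IsOptimal {n : ℕ} (P : Fin n → Fin 2 → ℝ) : Prop :=
  (∀ i j, P i j ∈ Set.Icc (0:ℝ) 1) ∧
    ∀ Q : Fin n → Fin 2 → ℝ, (∀ i j, Q i j ∈ Set.Icc (0:ℝ) 1) → starDisc P ≤ starDisc Q

/-- Up-shift: replace `x⁽ⁱ⁾` by `(x⁽ⁱ⁾₁, x⁽ⁱ⁾₂ + δ)`. -/
def upShift {n : ℕ} (P : Fin n → Fin 2 → ℝ) (i : Fin n) (δ : ℝ) : Fin n → Fin 2 → ℝ :=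
  Function.update P i (fun j => P i j + if j = (1 : Fin 2) then δ else 0)

/-- Right-shift: replace `x⁽ⁱ⁾` by `(x⁽ⁱ⁾₁ + δ, x⁽ⁱ⁾₂)`. -/
def rightShift {n : ℕ} (P : Fin n → Fin 2 → ℝ) (i : Fin n) (δ : ℝ) : Fin n → Fin 2 → ℝ :=
  Function.update P i (fun j => P i j + if j = (0 : Fin 2) then δ else 0)

/-- Down-shift: replace `x⁽ⁱ⁾` by `(x⁽ⁱ⁾₁, x⁽ⁱ⁾₂ − δ)`. -/
def downShift {n : ℕ} (P : Fin n → Fin 2 → ℝ) (i : Fin n) (δ : ℝ) : Fin n → Fin 2 → ℝ :=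
  Function.update P i (fun j => P i j - if j = (1 : Fin 2) then δ else 0)

/-- Left-shift: replace `x⁽ⁱ⁾` by `(x⁽ⁱ⁾₁ − δ, x⁽ⁱ⁾₂)`. -/
def leftShift {n : ℕ} (P : Fin n → Fin 2 → ℝ) (i : Fin n) (δ : ℝ) : Fin n → Fin 2 → ℝ :=
  Function.update P i (fun j => P i j - if j = (0 : Fin 2) then δ else 0)

/-- An up-shift of `x⁽ⁱ⁾` by `δ` is admissible if some other point lies (weakly) below-left
of `x⁽ⁱ⁾` and `δ ≤ 1/n − min{x⁽ⁱ⁾₂ − x⁽ᵏ⁾₂ : k ≠ i, x⁽ᵏ⁾ ≤ x⁽ⁱ⁾}`. -/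
def AdmissibleUp {n : ℕ} (P : Fin n → Fin 2 → ℝ) (i : Fin n) (δ : ℝ) : Prop :=
  (∃ k, k ≠ i ∧ ∀ j, P k j ≤ P i j) ∧
    δ ≤ 1 / n - sInf {t : ℝ | ∃ k, k ≠ i ∧ (∀ j, P k j ≤ P i j) ∧ t = P i 1 - P k 1}

/-- Admissibility of a right-shift (same as `AdmissibleUp` with the first coordinate). -/
def AdmissibleRight {n : ℕ} (P : Fin n → Fin 2 → ℝ) (i : Fin n) (δ : ℝ) : Prop :=
  (∃ k, k ≠ i ∧ ∀ j, P k j ≤ P i j) ∧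
    δ ≤ 1 / n - sInf {t : ℝ | ∃ k, k ≠ i ∧ (∀ j, P k j ≤ P i j) ∧ t = P i 0 - P k 0}

/-- A down-shift of `x⁽ⁱ⁾` by `δ` is admissible if some other point lies (weakly) above-right
of `x⁽ⁱ⁾` and `δ ≤ 1/n − min{x⁽ᵏ⁾₂ − x⁽ⁱ⁾₂ : k ≠ i, x⁽ᵏ⁾ ≥ x⁽ⁱ⁾}`. -/
def AdmissibleDown {n : ℕ} (P : Fin n → Fin 2 → ℝ) (i : Fin n) (δ : ℝ) : Prop :=
  (∃ k, k ≠ i ∧ ∀ j, P i j ≤ P k j) ∧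
    δ ≤ 1 / n - sInf {t : ℝ | ∃ k, k ≠ i ∧ (∀ j, P i j ≤ P k j) ∧ t = P k 1 - P i 1}

/-- Admissibility of a left-shift (same as `AdmissibleDown` with the first coordinate). -/
def AdmissibleLeft {n : ℕ} (P : Fin n → Fin 2 → ℝ) (i : Fin n) (δ : ℝ) : Prop :=
  (∃ k, k ≠ i ∧ ∀ j, P i j ≤ P k j) ∧
    δ ≤ 1 / n - sInf {t : ℝ | ∃ k, k ≠ i ∧ (∀ j, P i j ≤ P k j) ∧ t = P k 0 - P i 0}

/-!
Moving the point `x⁽ⁱ⁾` upwards (or rightwards) can only decrease the counts of closed anchored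
boxes, so the closed local discrepancy does not grow, and the open local discrepancy changes only at
boxes `[0,q)` that contained the old point but not the new one. There the count drops by one,
i.e. the open local discrepancy grows by `1/n`. Admissibility provides a point `x⁽ᵏ⁾ ≤ x⁽ⁱ⁾` with
`x⁽ⁱ⁾_c + δ − x⁽ᵏ⁾_c ≤ 1/n` in the shifted coordinate `c`; cutting `q_c` down to `x⁽ᵏ⁾_c` loses
volume at most `1/n` but removes both `x⁽ⁱ⁾` and `x⁽ᵏ⁾` from the box, so the original tuple already
has a local discrepancy at least as large there.
-/

section Discrepancy

variable {n d : ℕ}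

lemma bddAbove_localDisc (P : Fin n → Fin d → ℝ) :
    BddAbove {r : ℝ | ∃ q : Fin d → ℝ, (∀ j, q j ∈ Set.Icc (0:ℝ) 1) ∧ r = localDisc P q} := by
  refine ⟨1, ?_⟩
  rintro r ⟨q, hq, rfl⟩
  have hvol_nonneg : 0 ≤ ∏ j, q j := prod_nonneg fun j _ => (hq j).1
  have hvol_le : ∏ j, q j ≤ 1 := prod_le_one (fun j _ => (hq j).1) fun j _ => (hq j).2
  have hclosed : (closedCount P q : ℝ) / n ≤ 1 := by
    refine div_le_one_of_le₀ ?_ (Nat.cast_nonneg n)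
    exact_mod_cast (card_filter_le _ _).trans_eq (card_fin n)
  have hopen : 0 ≤ (openCount P q : ℝ) / n := by positivity
  exact max_le (by unfold openDisc; linarith) (by unfold closedDisc; linarith)

lemma localDisc_le_starDisc (P : Fin n → Fin d → ℝ) {q : Fin d → ℝ}
    (hq : ∀ j, q j ∈ Set.Icc (0:ℝ) 1) : localDisc P q ≤ starDisc P :=
  le_csSup (bddAbove_localDisc P) ⟨q, hq, rfl⟩

lemma openDisc_le_starDisc (P : Fin n → Fin d → ℝ) {q : Fin d → ℝ}
    (hq : ∀ j, q j ∈ Set.Icc (0:ℝ) 1) : openDisc P q ≤ starDisc P :=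
  (le_max_left _ _).trans (localDisc_le_starDisc P hq)

lemma closedDisc_le_starDisc (P : Fin n → Fin d → ℝ) {q : Fin d → ℝ}
    (hq : ∀ j, q j ∈ Set.Icc (0:ℝ) 1) : closedDisc P q ≤ starDisc P :=
  (le_max_right _ _).trans (localDisc_le_starDisc P hq)

lemma starDisc_le_of_forall_localDisc_le {P : Fin n → Fin d → ℝ} {r : ℝ}
    (h : ∀ q : Fin d → ℝ, (∀ j, q j ∈ Set.Icc (0:ℝ) 1) → localDisc P q ≤ r) :
    starDisc P ≤ r :=
  csSup_le ⟨_, 0, fun _ => ⟨le_rfl, zero_le_one⟩, rfl⟩ (by rintro _ ⟨q, hq, rfl⟩; exact h q hq)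

lemma closedDisc_le_of_le {P P' : Fin n → Fin d → ℝ} (h : ∀ m j, P m j ≤ P' m j)
    (q : Fin d → ℝ) : closedDisc P' q ≤ closedDisc P q := by
  have hcount : closedCount P' q ≤ closedCount P q :=
    card_le_card <| monotone_filter_right _ fun m _ hm j => (h m j).trans (hm j)
  unfold closedDisc
  gcongr

lemma openCount_update_add (P : Fin n → Fin d → ℝ) (i : Fin n) (x q : Fin d → ℝ) :
    openCount (Function.update P i x) q + (if ∀ j, P i j < q j then 1 else 0) =
      openCount P q + (if ∀ j, x j < q j then 1 else 0) := by
  unfold openCount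
  simp only [card_filter]
  rw [← add_sum_erase _ _ (mem_univ i), ← add_sum_erase _ _ (mem_univ i),
    Function.update_self, sum_congr rfl fun m hm => by rw [Function.update_of_ne (ne_of_mem_erase hm)]]
  ring

lemma openCount_add_two_le {P : Fin n → Fin d → ℝ} {i k : Fin n} {q q' : Fin d → ℝ}
    (hq : ∀ j, q' j ≤ q j) (hik : i ≠ k) (hi : ∀ j, P i j < q j) (hk : ∀ j, P k j < q j)
    (hi' : ¬ ∀ j, P i j < q' j) (hk' : ¬ ∀ j, P k j < q' j) :
    openCount P q' + 2 ≤ openCount P q := by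
  have hsub : insert i (insert k (univ.filter fun m => ∀ j, P m j < q' j)) ⊆
      univ.filter fun m => ∀ j, P m j < q j := by
    intro m hm
    simp only [mem_insert, mem_filter, mem_univ, true_and] at hm ⊢
    rcases hm with rfl | rfl | hm
    · exact hi
    · exact hk
    · exact fun j => (hm j).trans_le (hq j)
  have hcard := card_le_card hsub
  rw [card_insert_of_notMem (by simp [hik, hi']), card_insert_of_notMem (by simp [hk'])] at hcard
  exact hcard

lemma prod_sub_prod_update_le {q : Fin d → ℝ} (hq : ∀ j, q j ∈ Set.Icc (0:ℝ) 1) (c : Fin d)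
    {a : ℝ} (ha : a ≤ q c) : ∏ j, q j - ∏ j, Function.update q c a j ≤ q c - a := by
  have hrest_nonneg : 0 ≤ ∏ j ∈ univ.erase c, q j := prod_nonneg fun j _ => (hq j).1
  have hrest_le : ∏ j ∈ univ.erase c, q j ≤ 1 :=
    prod_le_one (fun j _ => (hq j).1) fun j _ => (hq j).2
  rw [← mul_prod_erase _ _ (mem_univ c), prod_update_of_mem (mem_univ c),
    sdiff_singleton_eq_erase, ← sub_mul]
  exact mul_le_of_le_one_right (sub_nonneg.mpr ha) hrest_le

end Discrepancy

section Shift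

variable {n d : ℕ} {P : Fin n → Fin d → ℝ} {i k : Fin n} {c : Fin d} {x : Fin d → ℝ}

lemma openDisc_update_le_starDisc (hPk : 0 ≤ P k c) (hki : k ≠ i) (hk : ∀ j, P k j ≤ P i j)
    (hx : ∀ j, P i j ≤ x j) (hxc : ∀ j, j ≠ c → x j = P i j) (hgap : x c - P k c ≤ 1 / n)
    {q : Fin d → ℝ} (hq : ∀ j, q j ∈ Set.Icc (0:ℝ) 1) :
    openDisc (Function.update P i x) q ≤ starDisc P := by
  have hcount := openCount_update_add P i x q
  by_cases hxq : ∀ j, x j < q j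
  · have hiq : ∀ j, P i j < q j := fun j => (hx j).trans_lt (hxq j)
    rw [if_pos hiq, if_pos hxq, add_left_inj] at hcount
    rw [openDisc, hcount]
    exact openDisc_le_starDisc P hq
  by_cases hiq : ∀ j, P i j < q j
  swap
  · rw [if_neg hiq, if_neg hxq, add_left_inj] at hcount
    rw [openDisc, hcount]
    exact openDisc_le_starDisc P hq
  rw [if_pos hiq, if_neg hxq, add_zero] at hcount
  have hqc : q c ≤ x c := by
    by_contra! hcx
    refine hxq fun j => ?_
    rcases eq_or_ne j c with rfl | hj
    · exact hcx
    · rw [hxc j hj]; exact hiq j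
  have hkc : P k c ≤ q c := (hk c).trans (hiq c).le
  set q' := Function.update q c (P k c)
  have hq' : ∀ j, q' j ∈ Set.Icc (0:ℝ) 1 := by
    intro j
    rcases eq_or_ne j c with rfl | hj
    · simpa [q'] using ⟨hPk, hkc.trans (hq j).2⟩
    · simpa [q', hj] using hq j
  have hcount' : openCount P q' + 2 ≤ openCount P q := by
    refine openCount_add_two_le (fun j => ?_) hki.symm hiq (fun j => (hk j).trans_lt (hiq j))
      (fun h => ?_) (fun h => ?_)
    · rcases eq_or_ne j c with rfl | hj
      · simpa [q'] using hkc
      · simp [q', hj]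
    · exact (h c).not_ge (by simpa [q'] using hk c)
    · exact (h c).ne (by simp [q'])
  have hvol : ∏ j, q j - ∏ j, q' j ≤ q c - P k c := prod_sub_prod_update_le hq c hkc
  have hone : (openCount (Function.update P i x) q : ℝ) / n = openCount P q / n - 1 / n := by
    rw [← hcount]; push_cast; ring
  have htwo : (openCount P q' : ℝ) / n + 2 * (1 / n) ≤ openCount P q / n := by
    rw [mul_one_div, ← add_div]; gcongr; exact_mod_cast hcount'
  calc openDisc (Function.update P i x) q ≤ openDisc P q' := by
        unfold openDisc; rw [hone]; linarith
    _ ≤ starDisc P := openDisc_le_starDisc P hq'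

lemma starDisc_update_le (hPk : 0 ≤ P k c) (hki : k ≠ i) (hk : ∀ j, P k j ≤ P i j)
    (hx : ∀ j, P i j ≤ x j) (hxc : ∀ j, j ≠ c → x j = P i j) (hgap : x c - P k c ≤ 1 / n) :
    starDisc (Function.update P i x) ≤ starDisc P := by
  have hle : ∀ m j, P m j ≤ Function.update P i x m j := by
    intro m j
    rcases eq_or_ne m i with rfl | hm
    · simpa using hx j
    · simp [hm]
  exact starDisc_le_of_forall_localDisc_le fun q hq =>
    max_le (openDisc_update_le_starDisc hPk hki hk hx hxc hgap hq)
      ((closedDisc_le_of_le hle q).trans (closedDisc_le_starDisc P hq))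

end Shift

lemma exists_lower_gap_le_of_le_sub_sInf {n d : ℕ} {P : Fin n → Fin d → ℝ} {i : Fin n}
    {c : Fin d} {δ : ℝ} (hex : ∃ k, k ≠ i ∧ ∀ j, P k j ≤ P i j)
    (hδ : δ ≤ 1 / n - sInf {t : ℝ | ∃ k, k ≠ i ∧ (∀ j, P k j ≤ P i j) ∧ t = P i c - P k c}) :
    ∃ k, k ≠ i ∧ (∀ j, P k j ≤ P i j) ∧ P i c + δ - P k c ≤ 1 / n := by
  set S := {t : ℝ | ∃ k, k ≠ i ∧ (∀ j, P k j ≤ P i j) ∧ t = P i c - P k c}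
  obtain ⟨k₀, hk₀i, hk₀⟩ := hex
  have hS : S.Nonempty := ⟨_, k₀, hk₀i, hk₀, rfl⟩
  have hSfin : S.Finite :=
    (Set.finite_range fun k => P i c - P k c).subset fun _ ⟨k, _, _, ht⟩ => ⟨k, ht.symm⟩
  obtain ⟨k, hki, hk, hmin⟩ := hS.csInf_mem hSfin
  exact ⟨k, hki, hk, by linarith⟩

lemma IsOptimal.of_starDisc_le {n : ℕ} {P Q : Fin n → Fin 2 → ℝ} (hP : IsOptimal P)
    (hQ : ∀ i j, Q i j ∈ Set.Icc (0:ℝ) 1) (hle : starDisc Q ≤ starDisc P) : IsOptimal Q :=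
  ⟨hQ, fun R hR => hle.trans (hP.2 R hR)⟩

lemma IsOptimal.shift {n : ℕ} {P : Fin n → Fin 2 → ℝ} (hopt : IsOptimal P) {i : Fin n}
    {c : Fin 2} {δ : ℝ} (hδ : 0 ≤ δ) (hδ1 : δ ≤ 1 - P i c)
    (hadm : (∃ k, k ≠ i ∧ ∀ j, P k j ≤ P i j) ∧
      δ ≤ 1 / n - sInf {t : ℝ | ∃ k, k ≠ i ∧ (∀ j, P k j ≤ P i j) ∧ t = P i c - P k c}) :
    let P' := Function.update P i fun j => P i j + if j = c then δ else 0
    starDisc P' ≤ starDisc P ∧ IsOptimal P' := by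
  obtain ⟨k, hki, hk, hgap⟩ := exists_lower_gap_le_of_le_sub_sInf hadm.1 hadm.2
  have hle := starDisc_update_le (hopt.1 k c).1 hki hk
    (x := fun j => P i j + if j = c then δ else 0)
    (fun j => le_add_of_nonneg_right (by split_ifs <;> simp [hδ]))
    (fun j hj => by simp [hj]) (by simpa using hgap)
  refine ⟨hle, hopt.of_starDisc_le (fun m j => ?_) hle⟩
  rcases eq_or_ne m i with rfl | hm
  · have hPij := hopt.1 m j
    rcases eq_or_ne j c with rfl | hj
    · simp only [Function.update_self, if_pos]
      exact ⟨by linarith [hPij.1], by linarith⟩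
    · simpa [hj] using hPij
  · simpa [hm] using hopt.1 m j

/-- For an optimal `n`-point tuple `P*` in `[0,1]²`, admissible up-shifts and
right-shifts do not increase the star discrepancy; in particular the shifted tuples are again
optimal. -/
theorem stmt_8 {n : ℕ} (P : Fin n → Fin 2 → ℝ) (hopt : IsOptimal P) (i : Fin n) (δ : ℝ) :
    (0 < δ → δ ≤ 1 - P i 1 → AdmissibleUp P i δ →
      starDisc (upShift P i δ) ≤ starDisc P ∧ IsOptimal (upShift P i δ)) ∧
    (0 < δ → δ ≤ 1 - P i 0 → AdmissibleRight P i δ →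
      starDisc (rightShift P i δ) ≤ starDisc P ∧ IsOptimal (rightShift P i δ)) :=
  ⟨fun hδ hδ1 hadm => hopt.shift hδ.le hδ1 hadm, fun hδ hδ1 hadm => hopt.shift hδ.le hδ1 hadm⟩
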